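/- Let 1 ≤ k < n and let h ∈ ℝ^n. Then for every real ν ≥ 0 and every λ ∈ ℝ^n with λ_i ≥ 0 for all i, one has sup_{w ∈ S_s} hᵀw ≤ ‖λ + h̃ − ν·z‖₂, where ‖·‖₂ is the Euclidean norm. -/
import Mathlib

/-- `sortedAbs h` is the vector of magnitudes `|h i|` sorted in nondecreasing order. -/
noncomputable def sortedAbs {n : ℕ} (h : Fin n → ℝ) : Fin n → ℝ :=
  (fun i => |h i|) ∘ Tuple.sort (fun i => |h i|)

/-- The set `S_s`: vectors on the unit Euclidean sphere of `ℝ^n` such that the sum of the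
`k` largest magnitudes is at least the sum of the remaining `n - k` magnitudes. -/
def Ss (n k : ℕ) : Set (Fin n → ℝ) :=
  {w | (∑ i, (w i) ^ 2 = 1) ∧
    ∑ i ∈ Finset.univ.filter (fun i : Fin n => (i : ℕ) < n - k), sortedAbs w i ≤
      ∑ i ∈ Finset.univ.filter (fun i : Fin n => n - k ≤ (i : ℕ)), sortedAbs w i}

lemma sortedAbs_nonneg {n : ℕ} (h : Fin n → ℝ) (i : Fin n) : 0 ≤ sortedAbs h i :=
  abs_nonneg _

lemma sortedAbs_monotone {n : ℕ} (h : Fin n → ℝ) : Monotone (sortedAbs h) :=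
  Tuple.monotone_sort (fun i => |h i|)

lemma sum_sq_sortedAbs {n : ℕ} (w : Fin n → ℝ) :
    ∑ i, (sortedAbs w i) ^ 2 = ∑ i, (w i) ^ 2 := by
  have := Equiv.sum_comp (Tuple.sort fun i => |w i|) (fun i => (w i) ^ 2)
  simp only [sortedAbs, Function.comp, sq_abs]
  exact this

/-- for every `ν ≥ 0` and entrywise-nonnegative `λ`,
`sup_{w ∈ S_s} hᵀw ≤ ‖λ + h̃ - ν z‖₂`, where `z` has `1`s in the first `n - k`
coordinates and `-1`s in the last `k`. -/
theorem stmt8 (n k : ℕ) (hk1 : 1 ≤ k) (hkn : k < n) (h : Fin n → ℝ)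
    (z : Fin n → ℝ) (hz : z = fun i : Fin n => if (i : ℕ) < n - k then (1 : ℝ) else -1)
    (ν : ℝ) (hν : 0 ≤ ν) (lam : Fin n → ℝ) (hlam : ∀ i, 0 ≤ lam i) :
    sSup {v : ℝ | ∃ w ∈ Ss n k, v = ∑ i, h i * w i} ≤
      Real.sqrt (∑ i, (lam i + sortedAbs h i - ν * z i) ^ 2) := by
  apply Real.sSup_le _ (Real.sqrt_nonneg _)
  rintro v ⟨w, ⟨hw1, hw2⟩, rfl⟩
  set σ := Tuple.sort (fun i => |h i|)
  set τ := Tuple.sort (fun i => |w i|)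
  -- step 1: ∑ h w ≤ ∑ (sortedAbs h) (sortedAbs w)
  have step1 : ∑ i, h i * w i ≤ ∑ i, sortedAbs h i * sortedAbs w i := by
    have e1 : ∑ i, h i * w i = ∑ i, h (σ i) * w (σ i) :=
      (Equiv.sum_comp σ (fun i => h i * w i)).symm
    have e2 : ∀ i, h (σ i) * w (σ i) ≤ sortedAbs h i * sortedAbs w (τ.symm (σ i)) := by
      intro i
      calc h (σ i) * w (σ i) ≤ |h (σ i) * w (σ i)| := le_abs_self _
        _ = |h (σ i)| * |w (σ i)| := abs_mul _ _
        _ = sortedAbs h i * sortedAbs w (τ.symm (σ i)) := by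
            simp [sortedAbs, σ, τ]
    have e3 : ∑ i, sortedAbs h i * sortedAbs w ((σ.trans τ.symm) i)
        ≤ ∑ i, sortedAbs h i * sortedAbs w i :=
      Monovary.sum_mul_comp_perm_le_sum_mul
        ((sortedAbs_monotone h).monovary (sortedAbs_monotone w))
    calc ∑ i, h i * w i = ∑ i, h (σ i) * w (σ i) := e1
      _ ≤ ∑ i, sortedAbs h i * sortedAbs w (τ.symm (σ i)) := Finset.sum_le_sum fun i _ => e2 i
      _ ≤ ∑ i, sortedAbs h i * sortedAbs w i := e3
  -- step 2: add λ and subtract νz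
  have step2 : ∑ i, sortedAbs h i * sortedAbs w i
      ≤ ∑ i, (lam i + sortedAbs h i - ν * z i) * sortedAbs w i := by
    have expand : ∑ i, (lam i + sortedAbs h i - ν * z i) * sortedAbs w i
        = ∑ i, lam i * sortedAbs w i + ∑ i, sortedAbs h i * sortedAbs w i
          - ν * ∑ i, z i * sortedAbs w i := by
      rw [Finset.mul_sum, ← Finset.sum_add_distrib, ← Finset.sum_sub_distrib]
      apply Finset.sum_congr rfl; intros; ring
    have hlamw : 0 ≤ ∑ i, lam i * sortedAbs w i :=
      Finset.sum_nonneg fun i _ => mul_nonneg (hlam i) (sortedAbs_nonneg w i)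
    have hzw : ∑ i, z i * sortedAbs w i ≤ 0 := by
      subst hz
      rw [← Finset.sum_filter_add_sum_filter_not Finset.univ
        (fun i : Fin n => (i : ℕ) < n - k)]
      have A : ∑ i ∈ Finset.univ.filter (fun i : Fin n => (i : ℕ) < n - k),
          (if (i : ℕ) < n - k then (1:ℝ) else -1) * sortedAbs w i
          = ∑ i ∈ Finset.univ.filter (fun i : Fin n => (i : ℕ) < n - k), sortedAbs w i := by
        apply Finset.sum_congr rfl; intro i hi
        simp only [Finset.mem_filter] at hi
        rw [if_pos hi.2, one_mul]
      have B : ∑ i ∈ Finset.univ.filter (fun i : Fin n => ¬ (i : ℕ) < n - k),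
          (if (i : ℕ) < n - k then (1:ℝ) else -1) * sortedAbs w i
          = -∑ i ∈ Finset.univ.filter (fun i : Fin n => n - k ≤ (i : ℕ)), sortedAbs w i := by
        rw [← Finset.sum_neg_distrib]
        apply Finset.sum_congr
        · congr 1; funext i; simp [not_lt]
        · intro i hi
          simp only [Finset.mem_filter, not_lt] at hi
          rw [if_neg (not_lt.mpr hi.2)]; ring
      rw [A, B]
      linarith [hw2]
    nlinarith
  -- step 3: Cauchy-Schwarz
  have step3 : ∑ i, (lam i + sortedAbs h i - ν * z i) * sortedAbs w i
      ≤ Real.sqrt (∑ i, (lam i + sortedAbs h i - ν * z i) ^ 2) := by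
    have cs := Real.sum_mul_le_sqrt_mul_sqrt Finset.univ
      (fun i => lam i + sortedAbs h i - ν * z i) (sortedAbs w)
    have hn : ∑ i, (sortedAbs w i) ^ 2 = 1 := by rw [sum_sq_sortedAbs]; exact hw1
    rw [hn, Real.sqrt_one, mul_one] at cs
    exact cs
  linarith
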